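/- Suppose κ is the successor of an infinite cardinal and 2^{<κ} = κ. Then U_κ = d_κ. -/

import Mathlib

open Cardinal Set

namespace PaperFormal

noncomputable section

/-- The least (small) cardinality of a family `F : Set X` satisfying `P`. -/
def leastCard {X : Type 1} (P : Set X → Prop) : Cardinal.{0} :=
  sInf {c : Cardinal.{0} | ∃ F : Set X, P F ∧ Cardinal.lift.{1} c = #F}

/-- The collection of (codings of) functions from `κ` to `κ`. -/
def funOn (κ : Cardinal.{0}) : Set (Ordinal.{0} → Ordinal.{0}) :=
  {f | ∀ α < κ.ord, f α < κ.ord}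

/-- The unequality number `U_κ`. -/
def uneq (κ : Cardinal.{0}) : Cardinal.{0} :=
  leastCard fun F : Set (Ordinal.{0} → Ordinal.{0}) => F ⊆ funOn κ ∧
    ∀ g ∈ funOn κ, ∃ f ∈ F, {α | α < κ.ord ∧ f α = g α} = ∅

/-- The dominating number `d_κ`. -/
def domNum (κ : Cardinal.{0}) : Cardinal.{0} :=
  leastCard fun F : Set (Ordinal.{0} → Ordinal.{0}) => F ⊆ funOn κ ∧
    ∀ g ∈ funOn κ, ∃ f ∈ F, ∀ α < κ.ord, g α < f α

/-- The number `d̄_κ`. -/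
def domBar (κ : Cardinal.{0}) : Cardinal.{0} :=
  leastCard fun X : Set (Ordinal.{0} → Ordinal.{0}) => X ⊆ funOn κ ∧
    ∀ g ∈ funOn κ, ∃ x ⊆ X, x.Nonempty ∧ #x < Cardinal.lift.{1} κ ∧
      ∀ α < κ.ord, g α < sSup {o | ∃ f ∈ x, f α = o}

/-- The generalized Cantor space `^ρ2`, with points coded as subsets of `Iio ρ.ord`. -/
def cantor (ρ : Cardinal.{0}) : Set (Set Ordinal.{0}) := {x | x ⊆ Iio ρ.ord}

/-- A forcing condition: a pair `(a, t)` with `t ⊆ a ⊆ Iio ρ.ord` and `|a| < ν`. -/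
def IsCond (ν ρ : Cardinal.{0}) (a t : Set Ordinal.{0}) : Prop :=
  a ⊆ Iio ρ.ord ∧ t ⊆ a ∧ #a < Cardinal.lift.{1} ν

/-- The basic open set determined by a condition. -/
def basicOpen (ρ : Cardinal.{0}) (a t : Set Ordinal.{0}) : Set (Set Ordinal.{0}) :=
  {x | x ⊆ Iio ρ.ord ∧ x ∩ a = t}

/-- Dense open subsets of `^ρ2` (for the `<ν`-support topology). -/
def DenseOpen (ν ρ : Cardinal.{0}) (D : Set (Set Ordinal.{0})) : Prop :=
  D ⊆ cantor ρ ∧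
  (∀ x ∈ D, ∃ a t, IsCond ν ρ a t ∧ x ∈ basicOpen ρ a t ∧ basicOpen ρ a t ⊆ D) ∧
  (∀ a t, IsCond ν ρ a t → (basicOpen ρ a t ∩ D).Nonempty)

/-- Members of `M_{ν,ρ}`. -/
def Meager (ν ρ : Cardinal.{0}) (W : Set (Set Ordinal.{0})) : Prop :=
  W ⊆ cantor ρ ∧ ∃ X : Set (Set (Set Ordinal.{0})), X.Nonempty ∧
    #X ≤ Cardinal.lift.{1} ν ∧ (∀ D ∈ X, DenseOpen ν ρ D) ∧ W ∩ ⋂₀ X = ∅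

/-- The covering number for category `cov(M_{ν,ρ})`. -/
def covM (ν ρ : Cardinal.{0}) : Cardinal.{0} :=
  leastCard fun Y : Set (Set (Set Ordinal.{0})) =>
    (∀ W ∈ Y, Meager ν ρ W) ∧ ⋃₀ Y = cantor ρ

/-- A (`κ`-complete) ideal on `κ`. -/
structure IdealK (κ : Cardinal.{0}) where
  mem : Set (Set Ordinal.{0})
  subset_iio : ∀ A ∈ mem, A ⊆ Iio κ.ord
  singleton_mem : ∀ α < κ.ord, {α} ∈ mem
  subset_mem : ∀ A ∈ mem, ∀ B ⊆ A, B ∈ mem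
  sUnion_mem : ∀ X : Set (Set Ordinal.{0}), X ⊆ mem → #X < Cardinal.lift.{1} κ → ⋃₀ X ∈ mem
  ne_top : Iio κ.ord ∉ mem

/-- `J⁺`, the sets (⊆ κ) not in the ideal. -/
def IdealK.plus {κ : Cardinal.{0}} (J : IdealK κ) : Set (Set Ordinal.{0}) :=
  {A | A ⊆ Iio κ.ord ∧ A ∉ J.mem}

/-- `cof(J)`. -/
def IdealK.cof {κ : Cardinal.{0}} (J : IdealK κ) : Cardinal.{0} :=
  leastCard fun X : Set (Set Ordinal.{0}) =>
    X ⊆ J.mem ∧ ∀ A, A ∈ J.mem ↔ ∃ B ∈ X, A ⊆ B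

/-- `cof̄(J)`. -/
def IdealK.cofBar {κ : Cardinal.{0}} (J : IdealK κ) : Cardinal.{0} :=
  leastCard fun X : Set (Set Ordinal.{0}) =>
    X ⊆ J.mem ∧ ∀ A ∈ J.mem, ∃ x ⊆ X, #x < Cardinal.lift.{1} κ ∧ A ⊆ ⋃₀ x

/-- `non_κ(P)`. -/
def nonK (κ : Cardinal.{0}) (P : IdealK κ → Prop) : Cardinal.{0} :=
  sInf {c | ∃ J : IdealK κ, J.cof = c ∧ ¬ P J}

/-- `non̄_κ(P)`. -/
def nonBarK (κ : Cardinal.{0}) (P : IdealK κ → Prop) : Cardinal.{0} :=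
  sInf {c | ∃ J : IdealK κ, J.cofBar = c ∧ ¬ P J}

/-- Weak `P`-point. -/
def WeakPPoint {κ : Cardinal.{0}} (J : IdealK κ) : Prop :=
  ∀ A ∈ J.plus, ∀ f : Ordinal.{0} → Ordinal.{0},
    (∀ α ∈ A, f α < κ.ord) → (∀ β, {α ∈ A | f α = β} ∈ J.mem) →
    ∃ B ∈ J.plus, B ⊆ A ∧ ∀ β, #{α ∈ B | f α = β} < Cardinal.lift.{1} κ

/-- Weak `Q`-point. -/
def WeakQPoint {κ : Cardinal.{0}} (J : IdealK κ) : Prop :=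
  ∀ A ∈ J.plus, ∀ g ∈ funOn κ,
    ∃ B ∈ J.plus, B ⊆ A ∧ ∀ α ∈ B, ∀ β ∈ B, α < β → g α < β

/-- Weakly selective ideal. -/
def WeaklySelective {κ : Cardinal.{0}} (J : IdealK κ) : Prop :=
  WeakPPoint J ∧ WeakQPoint J

/-- Weak semi-`Q`-point. -/
def WeakSemiQPoint {κ : Cardinal.{0}} (J : IdealK κ) : Prop :=
  ∀ A ∈ J.plus, ∀ f : Ordinal.{0} → Ordinal.{0},
    (∀ α ∈ A, f α < κ.ord) →
    (∀ β, #{α ∈ A | f α = β} < Cardinal.lift.{1} κ) →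
    ∃ C ∈ J.plus, C ⊆ A ∧ ∀ β < κ.ord, #{α ∈ C | f α = β} ≤ Cardinal.lift.{1} β.card

/-- `P_κ(λ)`, coded as the small subsets of `Iio λ.ord`. -/
def smallSet (κ lam : Cardinal.{0}) : Set (Set Ordinal.{0}) :=
  {a | a ⊆ Iio lam.ord ∧ #a < Cardinal.lift.{1} κ}

/-- The ideal `I_{κ,λ}` of noncofinal subsets of `P_κ(λ)`. -/
def Ikl (κ lam : Cardinal.{0}) : Set (Set (Set Ordinal.{0})) :=
  {A | A ⊆ smallSet κ lam ∧ ∃ a ∈ smallSet κ lam, ∀ b ∈ A, ¬ a ⊆ b}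

/-- A (`κ`-complete fine) ideal on `P_κ(λ)`. -/
structure IdealP (κ lam : Cardinal.{0}) where
  mem : Set (Set (Set Ordinal.{0}))
  subset_pk : ∀ A ∈ mem, A ⊆ smallSet κ lam
  fine : Ikl κ lam ⊆ mem
  subset_mem : ∀ A ∈ mem, ∀ B ⊆ A, B ∈ mem
  sUnion_mem : ∀ X : Set (Set (Set Ordinal.{0})), X ⊆ mem →
    #X < Cardinal.lift.{1} κ → ⋃₀ X ∈ mem
  ne_top : smallSet κ lam ∉ mem

/-- `H⁺` computed from the underlying collection `Hm` of an ideal on `P_κ(λ)`. -/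
def plusOf (κ lam : Cardinal.{0}) (Hm : Set (Set (Set Ordinal.{0}))) :
    Set (Set (Set Ordinal.{0})) :=
  {A | A ⊆ smallSet κ lam ∧ A ∉ Hm}

/-- `H⁺`. -/
def IdealP.plus {κ lam : Cardinal.{0}} (H : IdealP κ lam) : Set (Set (Set Ordinal.{0})) :=
  plusOf κ lam H.mem

/-- `cof(H)`. -/
def IdealP.cof {κ lam : Cardinal.{0}} (H : IdealP κ lam) : Cardinal.{0} :=
  leastCard fun X : Set (Set (Set Ordinal.{0})) =>
    X ⊆ H.mem ∧ ∀ A, A ∈ H.mem ↔ ∃ B ∈ X, A ⊆ B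

/-- `cof̄(H)`. -/
def IdealP.cofBar {κ lam : Cardinal.{0}} (H : IdealP κ lam) : Cardinal.{0} :=
  leastCard fun X : Set (Set (Set Ordinal.{0})) =>
    X ⊆ H.mem ∧ ∀ A ∈ H.mem, ∃ x ⊆ X, #x < Cardinal.lift.{1} κ ∧ A ⊆ ⋃₀ x

/-- `d^κ_{κ,λ}`. -/
def domP (κ lam : Cardinal.{0}) : Cardinal.{0} :=
  leastCard fun F : Set (Ordinal.{0} → Set Ordinal.{0}) =>
    (∀ f ∈ F, ∀ α < κ.ord, f α ∈ smallSet κ lam) ∧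
    ∀ g : Ordinal.{0} → Set Ordinal.{0}, (∀ α < κ.ord, g α ∈ smallSet κ lam) →
      ∃ f ∈ F, ∀ α < κ.ord, g α ⊆ f α

/-- A maximal almost disjoint family of size `≥ κ` for `H` (a member of `M_H^{≥κ}`). -/
def IsMad {κ lam : Cardinal.{0}} (H : IdealP κ lam) (Q : Set (Set (Set Ordinal.{0}))) : Prop :=
  Q ⊆ H.plus ∧ Cardinal.lift.{1} κ ≤ #Q ∧
  (∀ A ∈ Q, ∀ B ∈ Q, A ≠ B → A ∩ B ∈ H.mem) ∧
  ∀ C ∈ H.plus, ∃ A ∈ Q, A ∩ C ∈ H.plus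

/-- The (small) cardinal `c` with `lift c = c'`, used to pull `λ^{<κ} = |P_κ(λ)|` down. -/
def downCard (c : Cardinal.{1}) : Cardinal.{0} :=
  sInf {d : Cardinal.{0} | Cardinal.lift.{1} d = c}

open Classical in
/-- The number `a_H`. -/
def aNum {κ lam : Cardinal.{0}} (H : IdealP κ lam) : Cardinal.{0} :=
  if ∃ Q, IsMad H Q then sInf {c | ∃ Q, IsMad H Q ∧ Cardinal.lift.{1} c = #Q}
  else 2 ^ Order.succ (downCard #(smallSet κ lam))

/-- Weak `π`-point. -/
def WeakPiPoint {κ lam : Cardinal.{0}} (H : IdealP κ lam) : Prop :=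
  ∀ f : Ordinal.{0} → Set (Set Ordinal.{0}), (∀ α < κ.ord, f α ∈ H.mem) →
    ∀ A ∈ H.plus, ∃ B ∈ H.plus, B ⊆ A ∧ ∀ α < κ.ord, B ∩ f α ∈ Ikl κ lam

/-- `∪(a ∩ κ)`. -/
def supK (κ : Cardinal.{0}) (a : Set Ordinal.{0}) : Ordinal.{0} :=
  sSup (a ∩ Iio κ.ord)

/-- The relation `a ≺ b`. -/
def prec (κ : Cardinal.{0}) (a b : Set Ordinal.{0}) : Prop :=
  a ⊆ b ∧ supK κ a < supK κ b

/-- `[A]_κ²`. -/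
def pairsK (κ : Cardinal.{0}) (A : Set (Set Ordinal.{0})) : Set (Ordinal.{0} × Set Ordinal.{0}) :=
  {p | ∃ a ∈ A, ∃ b ∈ A, supK κ a < supK κ b ∧ p = (supK κ a, b)}

/-- `[A]_≺²`. -/
def pairsPrec (κ : Cardinal.{0}) (A : Set (Set Ordinal.{0})) :
    Set (Ordinal.{0} × Set Ordinal.{0}) :=
  {p | ∃ a ∈ A, ∃ b ∈ A, prec κ a b ∧ p = (supK κ a, b)}

/-- `[A]_{κ,κ}²`. -/
def pairsKK (κ : Cardinal.{0}) (A : Set (Set Ordinal.{0})) : Set (Ordinal.{0} × Ordinal.{0}) :=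
  {p | ∃ a ∈ A, ∃ b ∈ A, supK κ a < supK κ b ∧ p = (supK κ a, supK κ b)}

/-- `S` is a set of ordinals of order type `α`. -/
def OrdType (S : Set Ordinal.{0}) (α : Ordinal.{0}) : Prop :=
  ∃ e : Ordinal.{0} → Ordinal.{0},
    (∀ i < α, ∀ j < α, i < j → e i < e j) ∧ e '' Iio α = S

/-- `(B, ≺)` has order type `α`. -/
def OrdTypePrec (κ : Cardinal.{0}) (B : Set (Set Ordinal.{0})) (α : Ordinal.{0}) : Prop :=
  ∃ e : Ordinal.{0} → Set Ordinal.{0},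
    (∀ i < α, ∀ j < α, i < j → prec κ (e i) (e j)) ∧ e '' Iio α = B

/-- The partition relation `κ → (κ, θ)²`. -/
def ArrowKTheta (κ : Cardinal.{0}) (θ : Ordinal.{0}) : Prop :=
  ∀ f : Ordinal.{0} → Ordinal.{0} → Fin 2, ∃ A ⊆ Iio κ.ord,
    (OrdType A κ.ord ∧ ∀ α ∈ A, ∀ β ∈ A, α < β → f α β = 0) ∨
    (OrdType A θ ∧ ∀ α ∈ A, ∀ β ∈ A, α < β → f α β = 1)

/-- `κ` is weakly compact. -/
def WeaklyCompact (κ : Cardinal.{0}) : Prop :=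
  ∀ f : Ordinal.{0} → Ordinal.{0} → Fin 2, ∃ A ⊆ Iio κ.ord,
    OrdType A κ.ord ∧ ∃ i, ∀ α ∈ A, ∀ β ∈ A, α < β → f α β = i

/-- The partition relation `J⁺ → (J⁺, α)²` for an ideal on `κ`. -/
def ArrowJ {κ : Cardinal.{0}} (J : IdealK κ) (α : Ordinal.{0}) : Prop :=
  ∀ A ∈ J.plus, ∀ f : Ordinal.{0} → Ordinal.{0} → Fin 2,
    ∃ B ⊆ A, (B ∈ J.plus ∧ ∀ β ∈ B, ∀ γ ∈ B, β < γ → f β γ = 0) ∨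
             (OrdType B α ∧ ∀ β ∈ B, ∀ γ ∈ B, β < γ → f β γ = 1)

/-- The square bracket relation `J⁺ → [J⁺]_ρ²` for an ideal on `κ`. -/
def SqBrJ {κ : Cardinal.{0}} (J : IdealK κ) (ρ : Cardinal.{0}) : Prop :=
  ∀ A ∈ J.plus, ∀ f : Ordinal.{0} → Ordinal.{0} → Ordinal.{0},
    (∀ β ∈ A, ∀ γ ∈ A, β < γ → f β γ < ρ.ord) →
    ∃ B ∈ J.plus, B ⊆ A ∧ {ξ | ∃ β ∈ B, ∃ γ ∈ B, β < γ ∧ f β γ = ξ} ≠ Iio ρ.ord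

/-- `H⁺ →_κ (H⁺, α)²`. -/
def ArrowP (κ lam : Cardinal.{0}) (Hm : Set (Set (Set Ordinal.{0}))) (α : Ordinal.{0}) : Prop :=
  ∀ F : Ordinal.{0} → Set Ordinal.{0} → Fin 2, ∀ A ∈ plusOf κ lam Hm,
    ∃ B ⊆ A, (B ∈ plusOf κ lam Hm ∧ ∀ p ∈ pairsK κ B, F p.1 p.2 = 0) ∨
             (OrdTypePrec κ B α ∧ ∀ p ∈ pairsK κ B, F p.1 p.2 = 1)

/-- `H⁺ →_{κ,κ} (H⁺, α)²`. -/
def ArrowPKK (κ lam : Cardinal.{0}) (Hm : Set (Set (Set Ordinal.{0}))) (α : Ordinal.{0}) : Prop :=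
  ∀ F : Ordinal.{0} → Ordinal.{0} → Fin 2, ∀ A ∈ plusOf κ lam Hm,
    ∃ B ⊆ A, (B ∈ plusOf κ lam Hm ∧ ∀ p ∈ pairsKK κ B, F p.1 p.2 = 0) ∨
             (OrdTypePrec κ B α ∧ ∀ p ∈ pairsKK κ B, F p.1 p.2 = 1)

/-- `H⁺ →_{κ,κ} (H⁺; α)²`. -/
def ArrowPKKsemi (κ lam : Cardinal.{0}) (Hm : Set (Set (Set Ordinal.{0}))) (α : Ordinal.{0}) :
    Prop :=
  ∀ F : Ordinal.{0} → Ordinal.{0} → Fin 2, ∀ A ∈ plusOf κ lam Hm,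
    ∃ B ⊆ A, (B ∈ plusOf κ lam Hm ∧ ∀ p ∈ pairsKK κ B, F p.1 p.2 = 0) ∨
             (OrdType {o | ∃ a ∈ B, supK κ a = o} α ∧ ∀ p ∈ pairsKK κ B, F p.1 p.2 = 1)

/-- `H⁺ →_κ (H⁺)²`. -/
def ArrowPConst (κ lam : Cardinal.{0}) (Hm : Set (Set (Set Ordinal.{0}))) : Prop :=
  ∀ F : Ordinal.{0} → Set Ordinal.{0} → Fin 2, ∀ A ∈ plusOf κ lam Hm,
    ∃ B ∈ plusOf κ lam Hm, B ⊆ A ∧ ∃ i, ∀ p ∈ pairsK κ B, F p.1 p.2 = i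

/-- `H⁺ →_{κ,κ} [H⁺]_ρ²`. -/
def SqBrPKK (κ lam : Cardinal.{0}) (Hm : Set (Set (Set Ordinal.{0}))) (ρ : Cardinal.{0}) : Prop :=
  ∀ F : Ordinal.{0} → Ordinal.{0} → Ordinal.{0},
    (∀ α β : Ordinal.{0}, α < β → β < κ.ord → F α β < ρ.ord) →
    ∀ A ∈ plusOf κ lam Hm, ∃ B ∈ plusOf κ lam Hm, B ⊆ A ∧
      {ξ | ∃ p ∈ pairsKK κ B, F p.1 p.2 = ξ} ≠ Iio ρ.ord

/-- The class `K(κ,λ)`. -/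
def Kset (κ lam : Cardinal.{0}) : Set Cardinal.{0} :=
  {σ | lam ≤ σ ∧ ∃ T ⊆ smallSet κ lam, Cardinal.lift.{1} σ = #T ∧
    ∀ a ∈ smallSet κ lam, #{t ∈ T | t ⊆ a} < Cardinal.lift.{1} κ}

end

end PaperFormal

/-!
Cut `κ` into `κ` blocks of length `ν`. As `κ ^ ν = 2 ^ (ν * ν) = κ`, the functions from a block to
`κ` can be enumerated in order type `κ`; the code of `f` at block `q` is one more than the index of
the restriction of `f` to that block. Let every `g` be avoided (disagreed with everywhere) by some
member of `F`, and suppose the codes of `F` fail to dominate some `g`. Since `|g q| ≤ ν`, the `ν`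
offsets of block `q` suffice to build one `x` that agrees, at some offset, with each enumerated
block function of index below `g q`. The member of `F` avoiding `x` has code at most `g q` at some
block `q`, so its restriction there has index below `g q` and it meets `x`: a contradiction.
-/

namespace PaperFormal

section LeastCard

variable {X Y : Type 1} {P : Set X → Prop} {Q : Set Y → Prop}

theorem leastCard_le {F : Set X} {c : Cardinal.{0}} (hF : P F) (hc : #F ≤ Cardinal.lift.{1} c) :
    leastCard P ≤ c := by
  obtain ⟨c', hc'⟩ := Cardinal.mem_range_lift_of_le.{0, 1} hc
  have hle : leastCard P ≤ c' := csInf_le' ⟨F, hF, hc'⟩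
  exact hle.trans (Cardinal.lift_le.1 (hc' ▸ hc))

theorem leastCard_le_leastCard (hP : ∃ F, ∃ c : Cardinal.{0}, P F ∧ #F ≤ Cardinal.lift.{1} c)
    (hPQ : ∀ F, P F → ∃ G, Q G ∧ #G ≤ #F) : leastCard Q ≤ leastCard P := by
  obtain ⟨F, c, hF, hc⟩ := hP
  obtain ⟨c', hc'⟩ := Cardinal.mem_range_lift_of_le.{0, 1} hc
  refine le_csInf ⟨c', F, hF, hc'⟩ ?_
  rintro d ⟨F, hF, hd⟩
  obtain ⟨G, hG, hGF⟩ := hPQ F hF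
  exact leastCard_le hG (hd ▸ hGF)

end LeastCard

def IsUneqFamily (κ : Cardinal.{0}) (F : Set (Ordinal.{0} → Ordinal.{0})) : Prop :=
  F ⊆ funOn κ ∧ ∀ g ∈ funOn κ, ∃ f ∈ F, {α | α < κ.ord ∧ f α = g α} = ∅

def IsDominatingFamily (κ : Cardinal.{0}) (F : Set (Ordinal.{0} → Ordinal.{0})) : Prop :=
  F ⊆ funOn κ ∧ ∀ g ∈ funOn κ, ∃ f ∈ F, ∀ α < κ.ord, g α < f α

theorem IsDominatingFamily.isUneqFamily {κ : Cardinal.{0}} {F : Set (Ordinal.{0} → Ordinal.{0})}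
    (hF : IsDominatingFamily κ F) : IsUneqFamily κ F := by
  refine ⟨hF.1, fun g hg => ?_⟩
  obtain ⟨f, hf, hgf⟩ := hF.2 g hg
  exact ⟨f, hf, eq_empty_of_forall_notMem fun α ⟨hα, hfg⟩ => (hgf α hα).ne hfg.symm⟩

theorem exists_isDominatingFamily {κ : Cardinal.{0}} (hκ : ℵ₀ ≤ κ) :
    ∃ F, IsDominatingFamily κ F ∧ #F ≤ Cardinal.lift.{1} (κ ^ κ) := by
  have hlim := Cardinal.isSuccLimit_ord hκ
  let extend : (Iio κ.ord → Iio κ.ord) → Ordinal.{0} → Ordinal.{0} :=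
    fun h α => if hα : α < κ.ord then h ⟨α, hα⟩ else 0
  refine ⟨range extend, ⟨?_, fun g hg => ?_⟩, ?_⟩
  · rintro _ ⟨h, rfl⟩ α hα
    simp only [extend, dif_pos hα]
    exact (h _).2
  · let succ_g : Iio κ.ord → Iio κ.ord := fun α => ⟨Order.succ (g α), hlim.succ_lt (hg α α.2)⟩
    refine ⟨extend succ_g, mem_range_self succ_g, fun α hα => ?_⟩
    simp only [extend, dif_pos hα]
    exact Order.lt_succ _
  · calc #(range extend) ≤ #(Iio κ.ord → Iio κ.ord) := Cardinal.mk_range_le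
      _ = Cardinal.lift.{1} (κ ^ κ) := by
        rw [← Cardinal.power_def, Cardinal.mk_Iio_ordinal, Cardinal.card_ord,
          Cardinal.lift_power]

theorem uneq_le_domNum {κ : Cardinal.{0}} (hκ : ℵ₀ ≤ κ) : uneq κ ≤ domNum κ := by
  obtain ⟨F, hF, hc⟩ := exists_isDominatingFamily hκ
  exact leastCard_le_leastCard (P := IsDominatingFamily κ) (Q := IsUneqFamily κ) ⟨F, _, hF, hc⟩
    fun F hF => ⟨F, hF.isUneqFamily, le_rfl⟩

section SuccessorCardinal

variable {ν κ : Cardinal.{0}}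

theorem power_eq_self_of_two_powerlt (hν : ℵ₀ ≤ ν) (hκ : κ = Order.succ ν)
    (h2 : (2 : Cardinal.{0}) ^< κ = κ) : κ ^ ν = κ := by
  have h2ν : (2 : Cardinal.{0}) ^ ν = κ := by rw [← h2, hκ, Cardinal.powerlt_succ two_ne_zero]
  rw [← h2ν, ← Cardinal.power_mul, Cardinal.mul_eq_self hν]

theorem ord_mul_add_lt_ord (hκ : ℵ₀ ≤ κ) (hνκ : ν < κ) {q i : Ordinal.{0}} (hq : q < κ.ord)
    (hi : i < ν.ord) : ν.ord * q + i < κ.ord :=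
  have hν : ν.ord < κ.ord := Cardinal.ord_lt_ord.2 hνκ
  Ordinal.isPrincipal_add_ord hκ (Ordinal.isPrincipal_mul_ord hκ hν hq) (hi.trans hν)

theorem exists_enum_fun_of_power_eq_self (hκ : κ ≠ 0) (hpow : κ ^ ν = κ) :
    ∃ e : Ordinal.{0} → Ordinal.{0} → Ordinal.{0}, (∀ δ i, e δ i < κ.ord) ∧
      ∀ h : Ordinal.{0} → Ordinal.{0}, (∀ i < ν.ord, h i < κ.ord) →
        ∃ δ < κ.ord, EqOn (e δ) h (Iio ν.ord) := by
  have hκ0 : (0 : Ordinal.{0}) < κ.ord := Cardinal.ord_pos.2 (pos_iff_ne_zero.2 hκ)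
  obtain ⟨E⟩ : Nonempty (Iio κ.ord ≃ (Iio ν.ord → Iio κ.ord)) := by
    rw [← Cardinal.eq, ← Cardinal.power_def, Cardinal.mk_Iio_ordinal, Cardinal.mk_Iio_ordinal,
      Cardinal.card_ord, Cardinal.card_ord, ← Cardinal.lift_power, hpow]
  refine ⟨fun δ i => if h : δ ∈ Iio κ.ord ∧ i ∈ Iio ν.ord then E ⟨δ, h.1⟩ ⟨i, h.2⟩ else 0,
    fun δ i => ?_, fun h hh => ?_⟩
  · dsimp only
    split_ifs
    exacts [(E _ _).2, hκ0]
  · let h' : Iio ν.ord → Iio κ.ord := fun i => ⟨h i, hh i i.2⟩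
    refine ⟨E.symm h', (E.symm h').2, fun i hi => ?_⟩
    dsimp only
    rw [dif_pos ⟨(E.symm h').2, hi⟩]
    simp only [Subtype.coe_eta, E.apply_symm_apply, h']

theorem exists_surjOn_Iio_ord {δ : Ordinal.{0}} (hδ : δ.card ≤ ν) :
    ∃ σ : Ordinal.{0} → Ordinal.{0}, SurjOn σ (Iio ν.ord) (Iio δ) := by
  rcases eq_or_ne δ 0 with rfl | hδ0
  · exact ⟨id, fun γ (hγ : γ < 0) => absurd hγ not_lt_zero⟩
  have : Nonempty (Iio δ) := ⟨⟨0, pos_iff_ne_zero.2 hδ0⟩⟩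
  obtain ⟨emb⟩ : Nonempty (Iio δ ↪ Iio ν.ord) := by
    rwa [← Cardinal.le_def, Cardinal.mk_Iio_ordinal, Cardinal.mk_Iio_ordinal, Cardinal.card_ord,
      Cardinal.lift_le]
  refine ⟨fun i => if h : i ∈ Iio ν.ord then (Function.invFun emb ⟨i, h⟩ : Iio δ) else 0,
    fun γ hγ => ⟨emb ⟨γ, hγ⟩, (emb _).2, ?_⟩⟩
  dsimp only
  rw [dif_pos (emb _).2]
  simp only [Subtype.coe_eta, Function.leftInverse_invFun emb.injective _]

noncomputable def blockDiagonal (b : Ordinal.{0}) (e σ : Ordinal.{0} → Ordinal.{0} → Ordinal.{0})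
    (α : Ordinal.{0}) : Ordinal.{0} :=
  e (σ (α / b) (α % b)) (α % b)

theorem blockDiagonal_mul_add {b q i : Ordinal.{0}} (e σ : Ordinal.{0} → Ordinal.{0} → Ordinal.{0})
    (hi : i < b) : blockDiagonal b e σ (b * q + i) = e (σ q i) i := by
  have hb : b ≠ 0 := hi.ne_bot
  rw [blockDiagonal, Ordinal.mul_add_div _ hb, Ordinal.div_eq_zero_of_lt hi, add_zero,
    Ordinal.mul_add_mod_self, Ordinal.mod_eq_of_lt hi]

theorem exists_isDominatingFamily_image (hν : ℵ₀ ≤ ν) (hκ : κ = Order.succ ν)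
    (hpow : κ ^ ν = κ) : ∃ code : (Ordinal.{0} → Ordinal.{0}) → Ordinal.{0} → Ordinal.{0},
      ∀ F, IsUneqFamily κ F → IsDominatingFamily κ (code '' F) := by
  have hνκ : ν < κ := hκ ▸ Order.lt_succ ν
  have hκ_inf : ℵ₀ ≤ κ := hν.trans hνκ.le
  have hlim := Cardinal.isSuccLimit_ord hκ_inf
  obtain ⟨e, he_lt, he_enum⟩ := exists_enum_fun_of_power_eq_self hνκ.ne_bot hpow
  have hblock : ∀ f ∈ funOn κ, ∀ q < κ.ord,
      ∃ δ < κ.ord, EqOn (e δ) (fun i => f (ν.ord * q + i)) (Iio ν.ord) :=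
    fun f hf q hq => he_enum _ fun i hi => hf _ (ord_mul_add_lt_ord hκ_inf hνκ hq hi)
  choose! idx hidx_lt hidx using hblock
  refine ⟨fun f q => Order.succ (idx f q), fun F ⟨hFsub, hFuneq⟩ => ⟨?_, fun g hg => ?_⟩⟩
  · rintro _ ⟨f, hf, rfl⟩ q hq
    exact hlim.succ_lt (hidx_lt f (hFsub hf) q hq)
  have hsurj : ∀ q < κ.ord, ∃ σ : Ordinal.{0} → Ordinal.{0}, SurjOn σ (Iio ν.ord) (Iio (g q)) :=
    fun q hq => exists_surjOn_Iio_ord (Order.lt_succ_iff.1 (Cardinal.lt_ord.1 (hκ ▸ hg q hq)))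
  choose! σ hσ using hsurj
  obtain ⟨f, hf, hfx⟩ := hFuneq (blockDiagonal ν.ord e σ) fun α _ => he_lt _ _
  refine ⟨_, mem_image_of_mem _ hf, fun q hq => Order.lt_succ_iff.2 (not_lt.1 fun hlt => ?_)⟩
  obtain ⟨i, hi, hσi⟩ := hσ q hq hlt
  have hagree : ν.ord * q + i ∈ {α | α < κ.ord ∧ f α = blockDiagonal ν.ord e σ α} := by
    refine ⟨ord_mul_add_lt_ord hκ_inf hνκ hq hi, ?_⟩
    rw [blockDiagonal_mul_add e σ hi, hσi]
    exact (hidx f (hFsub hf) q hq hi).symm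
  exact hfx.subset hagree

theorem domNum_le_uneq (hν : ℵ₀ ≤ ν) (hκ : κ = Order.succ ν) (hpow : κ ^ ν = κ) :
    domNum κ ≤ uneq κ := by
  obtain ⟨code, hcode⟩ := exists_isDominatingFamily_image hν hκ hpow
  obtain ⟨F, hF, hc⟩ := exists_isDominatingFamily (hν.trans (hκ ▸ Order.le_succ ν))
  exact leastCard_le_leastCard (P := IsUneqFamily κ) (Q := IsDominatingFamily κ)
    ⟨F, _, hF.isUneqFamily, hc⟩ fun F hF => ⟨code '' F, hcode F hF, Cardinal.mk_image_le⟩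

theorem uneq_eq_domNum_of_power_eq_self (hν : ℵ₀ ≤ ν) (hκ : κ = Order.succ ν)
    (hpow : κ ^ ν = κ) : uneq κ = domNum κ :=
  (uneq_le_domNum (hν.trans (hκ ▸ Order.le_succ ν))).antisymm (domNum_le_uneq hν hκ hpow)

end SuccessorCardinal

/-- If `κ` is a successor cardinal and `2^{<κ} = κ`, then `U_κ = d_κ`. -/
theorem uneq_eq_domNum (ν κ : Cardinal.{0}) (hν : ℵ₀ ≤ ν) (hκ : κ = Order.succ ν)
    (h2 : (2 : Cardinal.{0}) ^< κ = κ) :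
    uneq κ = domNum κ :=
  uneq_eq_domNum_of_power_eq_self hν hκ (power_eq_self_of_two_powerlt hν hκ h2)

end PaperFormal
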